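/- The extended subtyping relation, obtained by adding to the six subtyping rules the axiom (empty): τ1 ≤ τ2 for all τ2 whenever ↑τ1 does not hold, is sound with respect to containment of type interpretations: for all types τ1 and τ2, if τ1 ≤ τ2 is derivable by a contractive derivation in the extended system, then ⟦τ1⟧ ⊆ ⟦τ2⟧. -/

import Mathlib

/-! ## Possibly infinite types and values, coinductively defined as M-types -/

/-- Shapes of type constructors: `int`, object types (class name plus finite
set of field names), and binary union. -/
inductive TyShape : Type where
  | int : TyShape
  | obj : String → Finset String → TyShape
  | union : TyShape

/-- Children (immediate subterms) of each shape. -/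
def TyChild : TyShape → Type
  | .int => Empty
  | .obj _ fs => {f : String // f ∈ fs}
  | .union => Bool

/-- The polynomial functor whose final coalgebra is the set of types. -/
def TyP : PFunctor := ⟨TyShape, TyChild⟩

/-- Possibly infinite types, coinductively generated by
`τ ::= int | obj C [f₁:τ₁,…,fₙ:τₙ] | τ₁ ∨ τ₂`. -/
def Ty : Type := TyP.M

/-- The type `int`. -/
def Ty.int : Ty := PFunctor.M.mk ⟨TyShape.int, Empty.elim⟩

/-- The union type `τ₁ ∨ τ₂`. -/
def Ty.union (t1 t2 : Ty) : Ty :=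
  PFunctor.M.mk ⟨TyShape.union, fun b => cond b t1 t2⟩

/-- The object type `obj C [f:τ_f  |  f ∈ fs]`. -/
def Ty.obj (c : String) (fs : Finset String) (ch : {f : String // f ∈ fs} → Ty) : Ty :=
  PFunctor.M.mk ⟨TyShape.obj c fs, ch⟩

/-- Object type with no fields. -/
def Ty.obj0 (c : String) : Ty :=
  Ty.obj c ∅ (fun f => absurd f.2 (Finset.notMem_empty f.1))

/-- Object type with a single field. -/
def Ty.obj1 (c f : String) (t : Ty) : Ty :=
  Ty.obj c {f} (fun _ => t)

/-- Object type with two (distinct) fields. -/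
def Ty.obj2 (c f1 f2 : String) (t1 t2 : Ty) : Ty :=
  Ty.obj c {f1, f2} (fun g => if g.1 = f1 then t1 else t2)

/-- Shapes of values: integers and objects. -/
inductive ValShape : Type where
  | int : ℤ → ValShape
  | obj : String → Finset String → ValShape

/-- Children of each value shape. -/
def ValChild : ValShape → Type
  | .int _ => Empty
  | .obj _ fs => {f : String // f ∈ fs}

/-- The polynomial functor whose final coalgebra is the set of values. -/
def ValP : PFunctor := ⟨ValShape, ValChild⟩

/-- Possibly infinite values, coinductively generated by
`v ::= i | obj C [f₁↦v₁,…,fₙ↦vₙ]`. -/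
def Val : Type := ValP.M

/-- The integer value `i`. -/
def Val.int (i : ℤ) : Val := PFunctor.M.mk ⟨ValShape.int i, Empty.elim⟩

/-- The object value `obj C [f ↦ v_f | f ∈ fs]`. -/
def Val.obj (c : String) (fs : Finset String) (ch : {f : String // f ∈ fs} → Val) : Val :=
  PFunctor.M.mk ⟨ValShape.obj c fs, ch⟩

/-- Object value with a single field. -/
def Val.obj1 (c f : String) (v : Val) : Val :=
  Val.obj c {f} (fun _ => v)

/-! ## Subtyping

A contractive derivation is a possibly infinite derivation with no
sub-derivation built only with rules (∨R1) and (∨R2); equivalently, the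
premises of (∨R1) and (∨R2) are interpreted inductively (within a layer),
while the premises of all other rules are interpreted coinductively (they
refer to the greatest fixed point `Subty`). -/

/-- One inductive layer of the subtyping rules: premises of (∨R1)/(∨R2) are
inductive occurrences (so only finitely many consecutive applications of
these rules are possible, i.e. derivations are contractive), premises of all
other rules are occurrences of the coinductively-interpreted relation `R`. -/
inductive SubStep (R : Ty → Ty → Prop) : Ty → Ty → Prop where
  | int : SubStep R Ty.int Ty.int
  | unionR1 {t t1 t2 : Ty} : SubStep R t t1 → SubStep R t (Ty.union t1 t2)
  | unionR2 {t t1 t2 : Ty} : SubStep R t t2 → SubStep R t (Ty.union t1 t2)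
  | unionL {t1 t2 t : Ty} : R t1 t → R t2 t → SubStep R (Ty.union t1 t2) t
  | obj {c : String} {fs fs' : Finset String} (hsub : fs' ⊆ fs)
      {ch : {f : String // f ∈ fs} → Ty} {ch' : {f : String // f ∈ fs'} → Ty} :
      (∀ (f : String) (h : f ∈ fs'), R (ch ⟨f, hsub h⟩) (ch' ⟨f, h⟩)) →
      SubStep R (Ty.obj c fs ch) (Ty.obj c fs' ch')
  | distr {c : String} {fs : Finset String} {ch : {f : String // f ∈ fs} → Ty}
      {f : String} (hf : f ∈ fs) {s1 s2 t : Ty} :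
      ch ⟨f, hf⟩ = Ty.union s1 s2 →
      R (Ty.obj c fs (fun g => if g.1 = f then s1 else ch g)) t →
      R (Ty.obj c fs (fun g => if g.1 = f then s2 else ch g)) t →
      SubStep R (Ty.obj c fs ch) t

/-- The subtyping relation `τ ≤ τ′`: greatest fixed point of `SubStep`,
i.e. existence of a contractive, possibly infinite derivation. -/
def Subty (t1 t2 : Ty) : Prop :=
  ∃ R : Ty → Ty → Prop, (∀ x y, R x y → SubStep R x y) ∧ R t1 t2

/-! ## Membership of values in types -/

/-- One inductive layer of the membership rules: premises of (∨L)/(∨R) are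
inductive (contractiveness), premises of (obj) are coinductive. -/
inductive MemStep (R : Val → Ty → Prop) : Val → Ty → Prop where
  | int (i : ℤ) : MemStep R (Val.int i) Ty.int
  | unionL {v : Val} {t1 t2 : Ty} : MemStep R v t1 → MemStep R v (Ty.union t1 t2)
  | unionR {v : Val} {t1 t2 : Ty} : MemStep R v t2 → MemStep R v (Ty.union t1 t2)
  | obj {c : String} {gs fs : Finset String} (hsub : fs ⊆ gs)
      {vch : {f : String // f ∈ gs} → Val} {ch : {f : String // f ∈ fs} → Ty} :
      (∀ (f : String) (h : f ∈ fs), R (vch ⟨f, hsub h⟩) (ch ⟨f, h⟩)) →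
      MemStep R (Val.obj c gs vch) (Ty.obj c fs ch)

/-- The membership relation `v ∈ τ`: greatest fixed point of `MemStep`,
i.e. existence of a contractive, possibly infinite derivation. -/
def MemVal (v : Val) (t : Ty) : Prop :=
  ∃ R : Val → Ty → Prop, (∀ w s, R w s → MemStep R w s) ∧ R v t

/-! ## The non-emptiness predicate `↑τ` -/

/-- One inductive layer of the non-emptiness rules: premises of (↑∨L)/(↑∨R)
are inductive (contractiveness), premises of (↑obj) are coinductive. -/
inductive NEStep (R : Ty → Prop) : Ty → Prop where
  | int : NEStep R Ty.int
  | unionL {t1 t2 : Ty} : NEStep R t1 → NEStep R (Ty.union t1 t2)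
  | unionR {t1 t2 : Ty} : NEStep R t2 → NEStep R (Ty.union t1 t2)
  | obj {c : String} {fs : Finset String} {ch : {f : String // f ∈ fs} → Ty} :
      (∀ (f : String) (h : f ∈ fs), R (ch ⟨f, h⟩)) →
      NEStep R (Ty.obj c fs ch)

/-- The non-emptiness predicate `↑τ`: greatest fixed point of `NEStep`. -/
def NotEmpty (t : Ty) : Prop :=
  ∃ R : Ty → Prop, (∀ s, R s → NEStep R s) ∧ R t

/-- One inductive layer of the extended subtyping rules: the six subtyping
rules plus the axiom (empty): `τ1 ≤ τ2` whenever `↑τ1` does not hold. -/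
inductive SubEStep (R : Ty → Ty → Prop) : Ty → Ty → Prop where
  | int : SubEStep R Ty.int Ty.int
  | unionR1 {t t1 t2 : Ty} : SubEStep R t t1 → SubEStep R t (Ty.union t1 t2)
  | unionR2 {t t1 t2 : Ty} : SubEStep R t t2 → SubEStep R t (Ty.union t1 t2)
  | unionL {t1 t2 t : Ty} : R t1 t → R t2 t → SubEStep R (Ty.union t1 t2) t
  | obj {c : String} {fs fs' : Finset String} (hsub : fs' ⊆ fs)
      {ch : {f : String // f ∈ fs} → Ty} {ch' : {f : String // f ∈ fs'} → Ty} :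
      (∀ (f : String) (h : f ∈ fs'), R (ch ⟨f, hsub h⟩) (ch' ⟨f, h⟩)) →
      SubEStep R (Ty.obj c fs ch) (Ty.obj c fs' ch')
  | distr {c : String} {fs : Finset String} {ch : {f : String // f ∈ fs} → Ty}
      {f : String} (hf : f ∈ fs) {s1 s2 t : Ty} :
      ch ⟨f, hf⟩ = Ty.union s1 s2 →
      R (Ty.obj c fs (fun g => if g.1 = f then s1 else ch g)) t →
      R (Ty.obj c fs (fun g => if g.1 = f then s2 else ch g)) t →
      SubEStep R (Ty.obj c fs ch) t
  | empty {t1 t2 : Ty} : ¬ NotEmpty t1 → SubEStep R t1 t2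

/-- The extended subtyping relation: existence of a contractive, possibly
infinite derivation in the extended system. -/
def SubE (t1 t2 : Ty) : Prop :=
  ∃ R : Ty → Ty → Prop, (∀ x y, R x y → SubEStep R x y) ∧ R t1 t2

/-! The relation "`w ∈ σ` and `σ ≤ τ` in the extended system, for some `σ`" is closed under the
membership rules, hence contained in `∈` by coinduction. Given `v ∈ σ` and the top layer of a
derivation of `σ ≤ τ`, the rules (int), (obj), (∨R1), (∨R2) translate directly, and (empty) cannot
apply since `σ` is inhabited by `v`. For (∨L) and (distr) one passes to a branch `σᵢ` of a union that
`v`, or one of its fields, belongs to, and starts over. This terminates because the number of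
(∨L)/(∨R) rules in the top layer of the membership derivation, plus those in the top layers for
the fields, strictly decreases: this is where contractiveness of membership is used. -/

namespace Ty

lemma int_ne_union {a b : Ty} : Ty.int ≠ Ty.union a b := fun h =>
  TyShape.noConfusion (congrArg Sigma.fst (PFunctor.M.mk_inj h))

lemma int_ne_obj {c fs ch} : Ty.int ≠ Ty.obj c fs ch := fun h =>
  TyShape.noConfusion (congrArg Sigma.fst (PFunctor.M.mk_inj h))

lemma obj_ne_union {c fs ch} {a b : Ty} : Ty.obj c fs ch ≠ Ty.union a b := fun h =>
  TyShape.noConfusion (congrArg Sigma.fst (PFunctor.M.mk_inj h))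

lemma union_inj {a b c d : Ty} (h : Ty.union a b = Ty.union c d) : a = c ∧ b = d := by
  have h' := PFunctor.M.mk_inj h
  injection h' with _ hch
  exact ⟨congrFun hch true, congrFun hch false⟩

lemma obj_inj {c₁ c₂ : String} {fs₁ fs₂ : Finset String}
    {ch₁ : {f : String // f ∈ fs₁} → Ty} {ch₂ : {f : String // f ∈ fs₂} → Ty}
    (h : Ty.obj c₁ fs₁ ch₁ = Ty.obj c₂ fs₂ ch₂) : c₁ = c₂ ∧ fs₁ = fs₂ ∧ HEq ch₁ ch₂ := by
  have h' := PFunctor.M.mk_inj h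
  injection h' with hshape hch
  injection hshape with hc hfs
  exact ⟨hc, hfs, hch⟩

end Ty

lemma MemStep.mono {R S : Val → Ty → Prop} (hRS : ∀ v t, R v t → S v t) {v : Val} {t : Ty}
    (h : MemStep R v t) : MemStep S v t := by
  induction h with
  | int i => exact .int i
  | unionL _ ih => exact .unionL ih
  | unionR _ ih => exact .unionR ih
  | obj hsub hf => exact .obj hsub fun f h => hRS _ _ (hf f h)

lemma SubEStep.mono {R S : Ty → Ty → Prop} (hRS : ∀ t₁ t₂, R t₁ t₂ → S t₁ t₂) {t₁ t₂ : Ty}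
    (h : SubEStep R t₁ t₂) : SubEStep S t₁ t₂ := by
  induction h with
  | int => exact .int
  | unionR1 _ ih => exact .unionR1 ih
  | unionR2 _ ih => exact .unionR2 ih
  | unionL h₁ h₂ => exact .unionL (hRS _ _ h₁) (hRS _ _ h₂)
  | obj hsub hf => exact .obj hsub fun f h => hRS _ _ (hf f h)
  | distr hf heq h₁ h₂ => exact .distr hf heq (hRS _ _ h₁) (hRS _ _ h₂)
  | empty hne => exact .empty hne

lemma MemVal.unfold {v : Val} {t : Ty} (h : MemVal v t) : MemStep MemVal v t := by
  obtain ⟨R, hR, hvt⟩ := h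
  exact (hR _ _ hvt).mono fun w s hws => ⟨R, hR, hws⟩

lemma MemVal.of_memStep {v : Val} {t : Ty} (h : MemStep MemVal v t) : MemVal v t :=
  ⟨MemStep MemVal, fun _ _ h' => h'.mono fun _ _ => MemVal.unfold, h⟩

lemma SubE.unfold {t₁ t₂ : Ty} (h : SubE t₁ t₂) : SubEStep SubE t₁ t₂ := by
  obtain ⟨R, hR, ht⟩ := h
  exact (hR _ _ ht).mono fun s₁ s₂ hs => ⟨R, hR, hs⟩

lemma MemVal.notEmpty {v : Val} {t : Ty} (h : MemVal v t) : NotEmpty t := by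
  refine ⟨fun s => ∃ w, MemVal w s, ?_, v, h⟩
  rintro s ⟨w, hws⟩
  have hstep := hws.unfold
  clear hws
  induction hstep with
  | int => exact .int
  | unionL _ ih => exact .unionL ih
  | unionR _ ih => exact .unionR ih
  | obj _ hf => exact .obj fun f h => ⟨_, hf f h⟩

/-- A membership layer whose field premises `R k w τ` carry weights `k`; the index adds the number
of (∨L)/(∨R) rules in the layer to the weights of its fields. -/
inductive WMemStep (R : ℕ → Val → Ty → Prop) : ℕ → Val → Ty → Prop where
  | int (i : ℤ) : WMemStep R 0 (Val.int i) Ty.int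
  | unionL {n : ℕ} {v : Val} {t1 t2 : Ty} :
      WMemStep R n v t1 → WMemStep R (n + 1) v (Ty.union t1 t2)
  | unionR {n : ℕ} {v : Val} {t1 t2 : Ty} :
      WMemStep R n v t2 → WMemStep R (n + 1) v (Ty.union t1 t2)
  | obj {c : String} {gs fs : Finset String} (hsub : fs ⊆ gs)
      {vch : {f : String // f ∈ gs} → Val} {ch : {f : String // f ∈ fs} → Ty}
      (wt : {f : String // f ∈ fs} → ℕ) :
      (∀ (f : String) (h : f ∈ fs), R (wt ⟨f, h⟩) (vch ⟨f, hsub h⟩) (ch ⟨f, h⟩)) →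
      WMemStep R (∑ g, wt g) (Val.obj c gs vch) (Ty.obj c fs ch)

namespace WMemStep

variable {R : ℕ → Val → Ty → Prop} {n : ℕ} {v : Val}

lemma _root_.MemStep.exists_wMemStep {S : Val → Ty → Prop} (hSR : ∀ w t, S w t → ∃ k, R k w t)
    {t : Ty} (h : MemStep S v t) : ∃ n, WMemStep R n v t := by
  induction h with
  | int i => exact ⟨0, .int i⟩
  | unionL _ ih => exact ⟨_, .unionL ih.choose_spec⟩
  | unionR _ ih => exact ⟨_, .unionR ih.choose_spec⟩
  | obj hsub hf =>
    choose wt hwt using fun f h => hSR _ _ (hf f h)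
    exact ⟨_, .obj hsub (fun g => wt g.1 g.2) hwt⟩

lemma memVal (hR : ∀ k w t, R k w t → MemVal w t) {t : Ty} (h : WMemStep R n v t) :
    MemVal v t := by
  refine .of_memStep ?_
  induction h with
  | int i => exact .int i
  | unionL _ ih => exact .unionL ih
  | unionR _ ih => exact .unionR ih
  | obj hsub _ hf => exact .obj hsub fun f h => hR _ _ _ (hf f h)

lemma int_inv (h : WMemStep R n v Ty.int) : ∃ i, v = Val.int i := by
  generalize ht : Ty.int = t at h
  cases h with
  | int i => exact ⟨i, rfl⟩
  | unionL => exact absurd ht Ty.int_ne_union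
  | unionR => exact absurd ht Ty.int_ne_union
  | obj => exact absurd ht Ty.int_ne_obj

lemma exists_lt_of_union {t₁ t₂ : Ty} (h : WMemStep R n v (Ty.union t₁ t₂)) :
    ∃ m < n, WMemStep R m v t₁ ∨ WMemStep R m v t₂ := by
  generalize ht : Ty.union t₁ t₂ = t at h
  cases h with
  | int => exact absurd ht.symm Ty.int_ne_union
  | unionL h =>
    obtain ⟨rfl, rfl⟩ := Ty.union_inj ht
    exact ⟨_, Nat.lt_succ_self _, .inl h⟩
  | unionR h =>
    obtain ⟨rfl, rfl⟩ := Ty.union_inj ht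
    exact ⟨_, Nat.lt_succ_self _, .inr h⟩
  | obj => exact absurd ht.symm Ty.obj_ne_union

lemma obj_inv {c : String} {fs : Finset String} {ch : {f : String // f ∈ fs} → Ty}
    (h : WMemStep R n v (Ty.obj c fs ch)) :
    ∃ (gs : Finset String) (vch : {f : String // f ∈ gs} → Val) (hsub : fs ⊆ gs)
      (wt : {f : String // f ∈ fs} → ℕ), v = Val.obj c gs vch ∧ n = ∑ g, wt g ∧
      ∀ (f : String) (h : f ∈ fs), R (wt ⟨f, h⟩) (vch ⟨f, hsub h⟩) (ch ⟨f, h⟩) := by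
  generalize ht : Ty.obj c fs ch = t at h
  cases h with
  | int => exact absurd ht.symm Ty.int_ne_obj
  | unionL => exact absurd ht Ty.obj_ne_union
  | unionR => exact absurd ht Ty.obj_ne_union
  | obj hsub wt hf =>
    obtain ⟨rfl, rfl, hch⟩ := Ty.obj_inj ht
    cases hch
    exact ⟨_, _, hsub, wt, rfl, rfl, hf⟩

lemma exists_lt_of_distr {c : String} {fs : Finset String} {ch : {f : String // f ∈ fs} → Ty}
    {f : String} (hf : f ∈ fs) {σ₁ σ₂ : Ty} (hunion : ch ⟨f, hf⟩ = Ty.union σ₁ σ₂)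
    (h : WMemStep (WMemStep R) n v (Ty.obj c fs ch)) :
    ∃ m < n, WMemStep (WMemStep R) m v (Ty.obj c fs fun g => if g.1 = f then σ₁ else ch g) ∨
      WMemStep (WMemStep R) m v (Ty.obj c fs fun g => if g.1 = f then σ₂ else ch g) := by
  obtain ⟨gs, vch, hsub, wt, rfl, rfl, hfields⟩ := h.obj_inv
  have hfield := hfields f hf
  rw [hunion] at hfield
  obtain ⟨m, hm, hbranch⟩ := hfield.exists_lt_of_union
  let wt' : {g : String // g ∈ fs} → ℕ := fun g => if g.1 = f then m else wt g
  have hlighter : ∑ g, wt' g < ∑ g, wt g := by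
    refine Finset.sum_lt_sum (fun g _ => ?_) ⟨⟨f, hf⟩, Finset.mem_univ _, by simpa [wt'] using hm⟩
    dsimp only [wt']
    split_ifs with hgf
    · obtain ⟨g, hg⟩ := g
      subst hgf
      exact hm.le
    · exact le_rfl
  have hupdate : ∀ σ, WMemStep R m (vch ⟨f, hsub hf⟩) σ →
      WMemStep (WMemStep R) (∑ g, wt' g) (Val.obj c gs vch)
        (Ty.obj c fs fun g => if g.1 = f then σ else ch g) := by
    intro σ hσ
    refine .obj hsub wt' fun g hg => ?_
    by_cases hgf : g = f
    · subst hgf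
      simpa [wt'] using hσ
    · simpa [wt', hgf] using hfields g hg
  exact ⟨_, hlighter, hbranch.imp (hupdate σ₁) (hupdate σ₂)⟩

end WMemStep

/-- `WMemStep (WMemStep fun _ => MemVal)` weighs a membership layer by its (∨L)/(∨R) rules together
with those in the layers at its fields; the recursion for (∨L) and (distr) is on this weight. -/
lemma WMemStep.memStep_of_subEStep {n : ℕ} {v : Val} {s t : Ty}
    (hv : WMemStep (WMemStep fun _ => MemVal) n v s) (hst : SubEStep SubE s t) :
    MemStep (fun w t => ∃ s, MemVal w s ∧ SubE s t) v t := by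
  induction n using Nat.strong_induction_on generalizing v s t with
  | _ n IH =>
  induction hst with
  | int =>
    obtain ⟨i, rfl⟩ := hv.int_inv
    exact .int i
  | unionR1 _ ih => exact .unionL (ih hv)
  | unionR2 _ ih => exact .unionR (ih hv)
  | unionL h₁ h₂ =>
    obtain ⟨m, hm, hv' | hv'⟩ := hv.exists_lt_of_union
    exacts [IH m hm hv' h₁.unfold, IH m hm hv' h₂.unfold]
  | obj hsub hf =>
    obtain ⟨gs, vch, hsubv, _, rfl, _, hfields⟩ := hv.obj_inv
    exact .obj (hsub.trans hsubv) fun f h =>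
      ⟨_, (hfields f (hsub h)).memVal fun _ _ _ => id, hf f h⟩
  | distr hf hunion h₁ h₂ =>
    obtain ⟨m, hm, hv' | hv'⟩ := hv.exists_lt_of_distr hf hunion
    exacts [IH m hm hv' h₁.unfold, IH m hm hv' h₂.unfold]
  | empty hne =>
    exact absurd (hv.memVal fun _ _ _ h => h.memVal fun _ _ _ => id).notEmpty hne

/-- Soundness of the extended subtyping relation (with rule (empty)):
if `τ1 ≤ τ2` in the extended system then `⟦τ1⟧ ⊆ ⟦τ2⟧`. -/
theorem extended_subtyping_sound (t1 t2 : Ty) (h : SubE t1 t2) :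
    ∀ v : Val, MemVal v t1 → MemVal v t2 := by
  intro v hv
  refine ⟨fun w t => ∃ s, MemVal w s ∧ SubE s t, ?_, t1, hv, h⟩
  rintro w t ⟨s, hws, hst⟩
  obtain ⟨n, hn⟩ := hws.unfold.exists_wMemStep fun u σ hu =>
    hu.unfold.exists_wMemStep (R := fun _ => MemVal) fun _ _ hmem => ⟨0, hmem⟩
  exact hn.memStep_of_subEStep hst.unfold
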